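/- Member-by-member calibration coefficients: assume μ_x = μ_y = 0, σ_e² = σ_x² − c > 0, σ_x̄² = Var(X̄) > 0, and set R̄ = Cov(X̄, Y)/(σ_x̄ σ_y) with |R̄| ≤ 1. Define α = (σ_y/σ_x̄) · ((n−1)R̄ + √((n−1)² R̄² + 4n)) / (2n) and β² = (σ_y² − α R̄ σ_x̄ σ_y)/σ_e². Then β² ≥ 0, and the calibrated members X_i* = α X̄ + β (X_i − X̄) satisfy the climatological variance condition Var(X_i*) = σ_y² and the Spread-Error condition E[(α X̄ − Y)²] = ((n+1)/n) β² σ_e². -/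

import Mathlib

open MeasureTheory

/-- Covariance of two real random variables. -/
noncomputable def cov {Ω : Type*} [MeasurableSpace Ω] (μ : Measure Ω) (f g : Ω → ℝ) : ℝ :=
  ∫ ω, (f ω - ∫ x, f x ∂μ) * (g ω - ∫ x, g x ∂μ) ∂μ

/-- Ensemble mean. -/
noncomputable def ensMean {Ω : Type*} {n : ℕ} (X : Fin n → Ω → ℝ) (ω : Ω) : ℝ :=
  (∑ i, X i ω) / n

/-- Unbiased ensemble variance. -/
noncomputable def ensVar {Ω : Type*} {n : ℕ} (X : Fin n → Ω → ℝ) (ω : Ω) : ℝ :=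
  (∑ i, (X i ω - ensMean X ω) ^ 2) / ((n : ℝ) - 1)

/-- The Spread-Error statistic `δ_τ = ((n+1)/n) S_e² − (X̄ − Y)²`. -/
noncomputable def spreadError {Ω : Type*} {n : ℕ} (X : Fin n → Ω → ℝ) (Y : Ω → ℝ) (ω : Ω) : ℝ :=
  (((n : ℝ) + 1) / n) * ensVar X ω - (ensMean X ω - Y ω) ^ 2

lemma l2_mul_integrable {Ω : Type*} [MeasurableSpace Ω] {μ : Measure Ω} {f g : Ω → ℝ}
    (hf : MemLp f 2 μ) (hg : MemLp g 2 μ) :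
    Integrable (fun ω => f ω * g ω) μ := by
  have h : (fun ω => f ω * g ω) = fun ω => ((f ω + g ω) ^ 2 - f ω ^ 2 - g ω ^ 2) / 2 := by
    funext ω; ring
  rw [h]
  exact (((hf.add hg).integrable_sq.sub hf.integrable_sq).sub hg.integrable_sq).div_const 2

lemma int_sq_comb {Ω : Type*} [MeasurableSpace Ω] {μ : Measure Ω} (a b : ℝ) {f g : Ω → ℝ}
    (hf : MemLp f 2 μ) (hg : MemLp g 2 μ) :
    ∫ ω, (a * f ω + b * g ω) ^ 2 ∂μ =
      a ^ 2 * ∫ ω, f ω * f ω ∂μ + 2 * a * b * ∫ ω, f ω * g ω ∂μ + b ^ 2 * ∫ ω, g ω * g ω ∂μ := by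
  have hff := l2_mul_integrable hf hf
  have hfg := l2_mul_integrable hf hg
  have hgg := l2_mul_integrable hg hg
  have h : (fun ω => (a * f ω + b * g ω) ^ 2) =
      fun ω => a ^ 2 * (f ω * f ω) + (2 * a * b * (f ω * g ω) + b ^ 2 * (g ω * g ω)) := by
    funext ω; ring
  have i1 : Integrable (fun ω => a ^ 2 * (f ω * f ω)) μ := hff.const_mul _
  have i2 : Integrable (fun ω => 2 * a * b * (f ω * g ω) + b ^ 2 * (g ω * g ω)) μ := by
    exact (hfg.const_mul _).add (hgg.const_mul _)
  rw [h]
  rw [integral_add i1 i2, integral_add (hfg.const_mul _) (hgg.const_mul _),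
    integral_const_mul, integral_const_mul, integral_const_mul]
  ring

set_option maxHeartbeats 1000000 in
/-- Member-by-member calibration coefficients: with `μ_x = μ_y = 0`, `σ_e² = σ_x² − c > 0`,
`σ_x̄² = Var(X̄) > 0`, `R̄ = Cov(X̄,Y)/(σ_x̄ σ_y)`, `|R̄| ≤ 1`,
`α = (σ_y/σ_x̄)((n−1)R̄ + √((n−1)²R̄² + 4n))/(2n)` and
`β² = (σ_y² − α R̄ σ_x̄ σ_y)/σ_e²`, one has `β² ≥ 0`, `Var(X_i*) = σ_y²`, and
`E[(α X̄ − Y)²] = ((n+1)/n) β² σ_e²` for the calibrated members `X_i* = α X̄ + β (X_i − X̄)`. -/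
theorem mbm_calibration_coefficients
    {Ω : Type*} [MeasurableSpace Ω] (μ : Measure Ω) [IsProbabilityMeasure μ]
    (n : ℕ) (hn : 2 ≤ n) (X : Fin n → Ω → ℝ) (Y : Ω → ℝ)
    (hL2 : ∀ i, MemLp (X i) 2 μ) (hYL2 : MemLp Y 2 μ)
    (μx σx2 c μy σy2 γ σxbar σy Rbar α β2 : ℝ) (hσx2 : 0 < σx2) (hσy2 : 0 < σy2)
    (hmean : ∀ i, ∫ ω, X i ω ∂μ = μx)
    (hvar : ∀ i, cov μ (X i) (X i) = σx2)
    (hcov : ∀ i j, i ≠ j → cov μ (X i) (X j) = c)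
    (hmeanY : ∫ ω, Y ω ∂μ = μy)
    (hvarY : cov μ Y Y = σy2)
    (hcovXY : ∀ i, cov μ (X i) Y = γ)
    (hμx0 : μx = 0) (hμy0 : μy = 0)
    (hσe2 : 0 < σx2 - c)
    (hσxbar : σxbar ^ 2 = cov μ (ensMean X) (ensMean X)) (hσxbar_pos : 0 < σxbar)
    (hσy : σy ^ 2 = σy2) (hσy_pos : 0 < σy)
    (hRbar : Rbar = cov μ (ensMean X) Y / (σxbar * σy)) (hRbar_le : |Rbar| ≤ 1)
    (hα : α = (σy / σxbar) *
      ((((n : ℝ) - 1) * Rbar + Real.sqrt (((n : ℝ) - 1) ^ 2 * Rbar ^ 2 + 4 * n)) / (2 * n)))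
    (hβ2 : β2 = (σy ^ 2 - α * Rbar * σxbar * σy) / (σx2 - c)) :
    0 ≤ β2 ∧
    (∀ i, cov μ (fun ω => α * ensMean X ω + Real.sqrt β2 * (X i ω - ensMean X ω))
               (fun ω => α * ensMean X ω + Real.sqrt β2 * (X i ω - ensMean X ω)) = σy2) ∧
    (∫ ω, (α * ensMean X ω - Y ω) ^ 2 ∂μ) = (((n : ℝ) + 1) / n) * β2 * (σx2 - c) := by
  have hn1 : (1:ℕ) ≤ n := le_trans one_le_two hn
  have hnR : (2:ℝ) ≤ n := by exact_mod_cast hn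
  have hn0 : (0:ℝ) < n := by linarith
  have hn0' : (n:ℝ) ≠ 0 := ne_of_gt hn0
  -- the sum
  set S : Ω → ℝ := fun ω => ∑ i, X i ω with hSdef
  have hSL2 : MemLp S 2 μ := by
    rw [hSdef]; exact memLp_finset_sum Finset.univ (fun i _ => hL2 i)
  have hIntX : ∀ i, Integrable (X i) μ := fun i => (hL2 i).integrable one_le_two
  have hIntY : Integrable Y μ := hYL2.integrable one_le_two
  have hIntS : Integrable S μ := integrable_finset_sum _ (fun i _ => hIntX i)
  -- means
  have hXmean : ∀ i, ∫ ω, X i ω ∂μ = 0 := fun i => by rw [hmean i, hμx0]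
  have hYmean : ∫ ω, Y ω ∂μ = 0 := by rw [hmeanY, hμy0]
  have hSmean : ∫ ω, S ω ∂μ = 0 := by
    simp only [hSdef]
    rw [integral_finset_sum _ (fun i _ => hIntX i)]
    simp [hXmean]
  -- cov with zero means is integral of product
  have hcov_eq : ∀ f g : Ω → ℝ, (∫ ω, f ω ∂μ = 0) → (∫ ω, g ω ∂μ = 0) →
      cov μ f g = ∫ ω, f ω * g ω ∂μ := by
    intro f g hf hg
    unfold cov
    rw [hf, hg]
    simp
  -- second moments
  have hXX : ∀ i j, ∫ ω, X i ω * X j ω ∂μ = if i = j then σx2 else c := by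
    intro i j
    rw [← hcov_eq _ _ (hXmean i) (hXmean j)]
    by_cases h : i = j
    · subst h; simp [hvar i]
    · simp [h, hcov i j h]
  have hXY : ∀ i, ∫ ω, X i ω * Y ω ∂μ = γ := fun i => by
    rw [← hcov_eq _ _ (hXmean i) hYmean]; exact hcovXY i
  have hYY : ∫ ω, Y ω * Y ω ∂μ = σy2 := by
    rw [← hcov_eq _ _ hYmean hYmean]; exact hvarY
  -- moments involving S
  have hXS : ∀ i, ∫ ω, X i ω * S ω ∂μ = σx2 + ((n:ℝ) - 1) * c := by
    intro i
    have h : (fun ω => X i ω * S ω) = fun ω => ∑ j, X i ω * X j ω := by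
      funext ω; simp [hSdef, Finset.mul_sum]
    rw [h, integral_finset_sum _ (fun j _ => l2_mul_integrable (hL2 i) (hL2 j))]
    rw [← Finset.add_sum_erase _ _ (Finset.mem_univ i)]
    have h2 : ∑ j ∈ Finset.univ.erase i, ∫ ω, X i ω * X j ω ∂μ
        = ∑ j ∈ Finset.univ.erase i, c := by
      refine Finset.sum_congr rfl fun j hj => ?_
      rw [hXX i j]
      simp [Ne.symm (Finset.ne_of_mem_erase hj)]
    rw [h2, hXX i i, Finset.sum_const, Finset.card_erase_of_mem (Finset.mem_univ i)]
    simp only [if_pos rfl, Finset.card_univ, Fintype.card_fin, nsmul_eq_mul]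
    rw [Nat.cast_sub hn1]
    simp
  have hSS : ∫ ω, S ω * S ω ∂μ = n * (σx2 + ((n:ℝ) - 1) * c) := by
    have h : (fun ω => S ω * S ω) = fun ω => ∑ i, X i ω * S ω := by
      funext ω; simp [hSdef, Finset.sum_mul]
    rw [h, integral_finset_sum _ (fun i _ => l2_mul_integrable (hL2 i) hSL2)]
    simp only [hXS, Finset.sum_const, Finset.card_univ, Fintype.card_fin, nsmul_eq_mul]
  have hSY : ∫ ω, S ω * Y ω ∂μ = n * γ := by
    have h : (fun ω => S ω * Y ω) = fun ω => ∑ i, X i ω * Y ω := by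
      funext ω; simp [hSdef, Finset.sum_mul]
    rw [h, integral_finset_sum _ (fun i _ => l2_mul_integrable (hL2 i) hYL2)]
    simp only [hXY, Finset.sum_const, Finset.card_univ, Fintype.card_fin, nsmul_eq_mul]
  -- ensMean as scaled S
  have hEM : ∀ ω, ensMean X ω = (1 / (n:ℝ)) * S ω := by
    intro ω; simp [ensMean, hSdef]; ring
  have hEMmean : ∫ ω, ensMean X ω ∂μ = 0 := by
    simp only [hEM]
    rw [integral_const_mul, hSmean, mul_zero]
  -- variance of ensemble mean
  have hVbar : (n:ℝ) * σxbar ^ 2 = σx2 + ((n:ℝ) - 1) * c := by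
    have h1 : cov μ (ensMean X) (ensMean X) = ∫ ω, ensMean X ω * ensMean X ω ∂μ :=
      hcov_eq _ _ hEMmean hEMmean
    have h2 : (fun ω => ensMean X ω * ensMean X ω) = fun ω => (1/(n:ℝ))^2 * (S ω * S ω) := by
      funext ω; rw [hEM ω]; ring
    rw [h1, h2, integral_const_mul, hSS] at hσxbar
    field_simp at hσxbar
    nlinarith [hσxbar]
  -- covariance of ensemble mean with Y
  have hγR : γ = Rbar * σxbar * σy := by
    have h1 : cov μ (ensMean X) Y = ∫ ω, ensMean X ω * Y ω ∂μ := hcov_eq _ _ hEMmean hYmean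
    have h2 : (fun ω => ensMean X ω * Y ω) = fun ω => (1/(n:ℝ)) * (S ω * Y ω) := by
      funext ω; rw [hEM ω]; ring
    rw [h1, h2, integral_const_mul, hSY] at hRbar
    rw [hRbar]
    field_simp
  -- the algebraic core: quadratic relation for α
  set s : ℝ := Real.sqrt (((n : ℝ) - 1) ^ 2 * Rbar ^ 2 + 4 * n) with hsdef
  have hs_nonneg : 0 ≤ s := Real.sqrt_nonneg _
  have hs2 : s ^ 2 = ((n:ℝ) - 1) ^ 2 * Rbar ^ 2 + 4 * n := by
    rw [hsdef]
    exact Real.sq_sqrt (by nlinarith [sq_nonneg (((n:ℝ)-1) * Rbar)])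
  have hR1 : Rbar ≤ 1 := le_of_abs_le hRbar_le
  have hR2 : -1 ≤ Rbar := neg_le_of_abs_le hRbar_le
  have hRsq : Rbar ^ 2 ≤ 1 := by nlinarith
  have hs_le : s ≤ (n:ℝ) + 1 := by
    rw [hsdef]
    have : ((n : ℝ) - 1) ^ 2 * Rbar ^ 2 + 4 * n ≤ ((n:ℝ) + 1) ^ 2 := by nlinarith
    calc Real.sqrt (((n : ℝ) - 1) ^ 2 * Rbar ^ 2 + 4 * n)
        ≤ Real.sqrt (((n:ℝ) + 1) ^ 2) := Real.sqrt_le_sqrt this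
      _ = (n:ℝ) + 1 := Real.sqrt_sq (by linarith)
  have h1 : 2 * (n:ℝ) * (α * σxbar) = σy * (((n:ℝ) - 1) * Rbar + s) := by
    rw [hα]; field_simp
  have hq : (n:ℝ) * (α * σxbar) ^ 2 = ((n:ℝ) - 1) * Rbar * (α * σxbar) * σy + σy ^ 2 := by
    have h4 : 4 * (n:ℝ) * ((n:ℝ) * (α * σxbar) ^ 2
        - (((n:ℝ) - 1) * Rbar * (α * σxbar) * σy + σy ^ 2)) = 0 := by
      linear_combination (2 * (n:ℝ) * (α * σxbar) + σy * (s - ((n:ℝ) - 1) * Rbar)) * h1 +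
        σy ^ 2 * hs2
    have h5 : (4:ℝ) * n ≠ 0 := by positivity
    have := mul_eq_zero.mp h4
    rcases this with h | h
    · exact absurd h (by positivity)
    · linarith
  -- β2 nonneg
  have h3 : Rbar * σy * (2 * (n:ℝ) * (α * σxbar)) = Rbar * σy * (σy * (((n:ℝ) - 1) * Rbar + s)) := by
    rw [h1]
  have hstuff : 0 ≤ 2 * (n:ℝ) - ((n:ℝ) - 1) * Rbar ^ 2 - Rbar * s := by
    have hRs : Rbar * s ≤ s := by nlinarith
    nlinarith
  have hnum : 0 ≤ σy ^ 2 - α * Rbar * σxbar * σy := by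
    nlinarith [mul_nonneg (sq_nonneg σy) hstuff, h3]
  have hβ2_nonneg : 0 ≤ β2 := by
    rw [hβ2]; exact div_nonneg hnum (le_of_lt hσe2)
  have hβ2eq : β2 * (σx2 - c) = σy ^ 2 - α * Rbar * σxbar * σy := by
    rw [hβ2]; field_simp
  have ha2 : Real.sqrt β2 ^ 2 = β2 := Real.sq_sqrt hβ2_nonneg
  refine ⟨hβ2_nonneg, ?_, ?_⟩
  · -- climatological variance condition
    intro i
    set a : ℝ := Real.sqrt β2 with hadef
    set b : ℝ := (α - a) / n with hbdef
    have hfe : (fun ω => α * ensMean X ω + a * (X i ω - ensMean X ω))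
        = fun ω => a * X i ω + b * S ω := by
      funext ω
      rw [hEM ω, hbdef]
      field_simp
      ring
    have hfmean : ∫ ω, (a * X i ω + b * S ω) ∂μ = 0 := by
      rw [integral_add ((hIntX i).const_mul _) (hIntS.const_mul _), integral_const_mul,
        integral_const_mul, hXmean i, hSmean]
      ring
    rw [hfe, hcov_eq _ _ hfmean hfmean]
    have h6 : ∫ ω, (a * X i ω + b * S ω) * (a * X i ω + b * S ω) ∂μ
        = ∫ ω, (a * X i ω + b * S ω) ^ 2 ∂μ := by
      congr 1; funext ω; ring
    rw [h6, int_sq_comb a b (hL2 i) hSL2, hXX i i, hXS i, hSS]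
    rw [if_pos rfl]
    rw [← hσy]
    have haa : a ^ 2 = β2 := ha2
    have hbb : (n:ℝ) * b = α - a := by rw [hbdef]; field_simp
    -- goal: a^2*σx2 + 2ab(σx2+(n-1)c) + b^2*(n*(σx2+(n-1)c)) = σy^2
    have key : (n:ℝ) * (a ^ 2 * σx2 + 2 * a * b * (σx2 + ((n:ℝ)-1)*c)
        + b ^ 2 * ((n:ℝ) * (σx2 + ((n:ℝ)-1)*c))) = (n:ℝ) * σy ^ 2 := by
      have e1 : σx2 + ((n:ℝ)-1)*c = (n:ℝ) * σxbar ^ 2 := hVbar.symm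
      rw [e1]
      -- n*(β2*σx2 + (2ab+nb²)*n σxbar²) with 2ab+nb² = (α²−β2)/n, i.e. n(2ab+nb²)=α²−β2
      have e2 : (n:ℝ) * (2 * a * b) + (n:ℝ) * ((n:ℝ) * b ^ 2) = α ^ 2 - β2 := by
        have : (n:ℝ) * (2 * a * b) + (n:ℝ) * ((n:ℝ) * b ^ 2)
            = (2 * a + (n:ℝ) * b) * ((n:ℝ) * b) := by ring
        rw [this, hbb]
        linear_combination -haa
      linear_combination ((n:ℝ) * σxbar ^ 2 * (a + α + (n:ℝ) * b)) * hbb +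
        ((n:ℝ) * σx2 - (n:ℝ) * σxbar ^ 2) * haa + (-β2) * hVbar + hq + ((n:ℝ) - 1) * hβ2eq
    have := mul_left_cancel₀ hn0' key
    linarith [this]
  · -- spread-error condition
    have hfe : (fun ω => α * ensMean X ω - Y ω) = fun ω => (α / n) * S ω + (-1) * Y ω := by
      funext ω
      rw [hEM ω]
      ring
    rw [show (fun ω => (α * ensMean X ω - Y ω) ^ 2) = fun ω => ((α / n) * S ω + (-1) * Y ω) ^ 2
      from by funext ω; rw [hEM ω]; ring]
    rw [int_sq_comb (α / n) (-1) hSL2 hYL2, hSS, hSY, hYY]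
    -- goal: (α/n)^2 * (n(σx2+(n-1)c)) + 2*(α/n)*(-1)*(nγ) + 1*σy2 = ((n+1)/n)*β2*(σx2-c)
    rw [← hσy]
    have e1 : (α / (n:ℝ)) ^ 2 * ((n:ℝ) * (σx2 + ((n:ℝ)-1)*c)) = α ^ 2 * σxbar ^ 2 := by
      rw [← hVbar]; field_simp
    have e2 : 2 * (α / (n:ℝ)) * (-1) * ((n:ℝ) * γ) = -2 * α * (Rbar * σxbar * σy) := by
      rw [hγR]; field_simp
    rw [e1, e2]
    have key : (n:ℝ) * (α ^ 2 * σxbar ^ 2 + (-2 * α * (Rbar * σxbar * σy)) + (-1)^2 * σy ^ 2)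
        = (n:ℝ) * ((((n:ℝ) + 1) / n) * β2 * (σx2 - c)) := by
      have e3 : (n:ℝ) * ((((n:ℝ) + 1) / n) * β2 * (σx2 - c))
          = ((n:ℝ) + 1) * (β2 * (σx2 - c)) := by field_simp
      rw [e3, hβ2eq]
      linear_combination hq
    have := mul_left_cancel₀ hn0' key
    linarith [this]
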